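/- Let d ≥ 1 and let G be a connected locally finite 2d-regular simple graph on vertex set V. If G is bipartite, then there exist permutations σ₁, …, σ_d of V such that for every vertex x the 2d vertices σ₁(x), σ₁⁻¹(x), …, σ_d(x), σ_d⁻¹(x) are pairwise distinct and their set is exactly the neighborhood of x in G. If G is not bipartite, then the same conclusion holds for the canonical double cover G ⊗ K₂ on the vertex set V × Bool. (Equivalently: either G, if it is bipartite, or G ⊗ K₂, otherwise, is isomorphic to a Schreier graph of the free group F_d.) -/

import Mathlib

/-!
A `k`-regular bipartite graph with `k ≥ 1` satisfies Hall's condition by double counting, so it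
has a perfect matching even when it is infinite; deleting it leaves a `(k - 1)`-regular bipartite
graph, so the edges split into `k` perfect matchings. For `k = 2d`, index the matchings by
`Bool × Fin d` and let `σᵢ` move a vertex `x` along matching `(c x, i)`, where `c` is a
2-colouring. Matchings swap the colours, so `σᵢ⁻¹ x` is the partner of `x` in matching
`(!c x, i)`, and the `2d` values `σᵢ^{±1} x` are the partners of `x` in all `2d` matchings. A
non-bipartite `G` is handled by applying this to `G ⊗ K₂`, which is bipartite via its `Bool`
coordinate and again `2d`-regular.
-/

/-- The canonical double cover `G ⊗ K₂` of a simple graph `G`: vertices are `V × Bool`,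
and `(v, b)` is adjacent to `(w, c)` iff `v` is adjacent to `w` in `G` and `b ≠ c`. -/
def doubleCover {V : Type*} (G : SimpleGraph V) : SimpleGraph (V × Bool) where
  Adj x y := G.Adj x.1 y.1 ∧ x.2 ≠ y.2
  symm := ⟨fun _ _ h => ⟨G.symm.symm _ _ h.1, Ne.symm h.2⟩⟩
  loopless := ⟨fun _ h => h.2 rfl⟩

/-- A graph `H` carries permutations `σ₁, …, σ_d` of its vertex set such that for every vertex
`x` the `2d` vertices `σ₁ x, σ₁⁻¹ x, …, σ_d x, σ_d⁻¹ x` are pairwise distinct and form exactly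
the neighborhood of `x`.  (This encodes being a Schreier graph of the free group `F_d`.) -/
def FreeGroupStructure {W : Type*} (H : SimpleGraph W) (d : ℕ) : Prop :=
  ∃ σ : Fin d → Equiv.Perm W,
    ∀ x : W,
      Function.Injective
        (Sum.elim (fun i : Fin d => σ i x) (fun i : Fin d => (σ i)⁻¹ x)) ∧
      Set.range (Sum.elim (fun i : Fin d => σ i x) (fun i : Fin d => (σ i)⁻¹ x)) =
        H.neighborSet x

open Function

theorem bijective_sumElim_prodMk_not (b : Bool) (α : Type*) :
    Bijective (Sum.elim (Prod.mk b) (Prod.mk !b) : α ⊕ α → Bool × α) := by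
  cases b
  · exact (Equiv.boolProdEquivSum α).symm.bijective
  · convert ((Equiv.sumComm α α).trans (Equiv.boolProdEquivSum α).symm).bijective using 1
    ext (a | a) <;> rfl

namespace SimpleGraph

variable {V : Type*} {G : SimpleGraph V}

theorem isRegularOfDegree_iff_encard_neighborSet [G.LocallyFinite] {k : ℕ} :
    G.IsRegularOfDegree k ↔ ∀ v, (G.neighborSet v).encard = k := by
  simp only [IsRegularOfDegree, ← coe_neighborFinset, Set.encard_coe_eq_coe_finsetCard,
    card_neighborFinset_eq_degree, Nat.cast_inj]

theorem IsRegularOfDegree.ncard_le_ncard_iUnion_neighborSet [G.LocallyFinite] {k : ℕ}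
    (hG : G.IsRegularOfDegree k) (hk : k ≠ 0) (s : Set V) :
    s.ncard ≤ (⋃ x ∈ s, G.neighborSet x).ncard := by
  classical
  rcases s.finite_or_infinite with hs | hs
  · lift s to Finset V using hs
    set t := s.biUnion fun v => G.neighborFinset v
    have ht : ⋃ x ∈ (s : Set V), G.neighborSet x = t := by
      simp [t, ← coe_neighborFinset]
    rw [ht, Set.ncard_coe_finset, Set.ncard_coe_finset]
    refine Nat.le_of_mul_le_mul_right (Finset.card_mul_le_card_mul G.Adj (fun a ha => ?_)
      (fun b _ => ?_)) (Nat.pos_of_ne_zero hk)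
    · rw [← hG a, ← card_neighborFinset_eq_degree]
      refine Finset.card_le_card fun b hb => ?_
      exact Finset.mem_filter.2 ⟨Finset.mem_biUnion.2 ⟨a, ha, hb⟩, (mem_neighborFinset ..).1 hb⟩
    · rw [← hG b, ← card_neighborFinset_eq_degree]
      refine Finset.card_le_card fun a ha => ?_
      exact (mem_neighborFinset ..).2 (Finset.mem_filter.1 ha).2.symm
  · simp [hs.ncard]

theorem Subgraph.IsPerfectMatching.exists_adj_iff_eq {M : G.Subgraph}
    (hM : M.IsPerfectMatching) : ∃ m : V → V, ∀ v w, M.Adj v w ↔ w = m v := by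
  choose m hm using isPerfectMatching_iff.1 hM
  exact ⟨m, fun v w => ⟨(hm v).2 w, fun h => h ▸ (hm v).1⟩⟩

theorem IsBipartite.exists_isPerfectMatching {k : ℕ} (hG : G.IsBipartite)
    (hreg : ∀ v, (G.neighborSet v).encard = k) (hk : k ≠ 0) :
    ∃ M : G.Subgraph, M.IsPerfectMatching := by
  have : G.LocallyFinite := fun v => (Set.finite_of_encard_eq_coe (hreg v)).fintype
  obtain ⟨s, t, hst⟩ := hG.exists_isBipartiteWith
  exact exists_isPerfectMatching_of_forall_ncard_le hst
    ((isRegularOfDegree_iff_encard_neighborSet.2 hreg).ncard_le_ncard_iUnion_neighborSet hk)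

theorem neighborSet_sdiff_spanningCoe {M : G.Subgraph} {m : V → V}
    (hm : ∀ v w, M.Adj v w ↔ w = m v) (v : V) :
    (G \ M.spanningCoe).neighborSet v = G.neighborSet v \ {m v} := by
  ext w
  simp [hm]

variable {ι : Type*}

/-- The `i`-th perfect matching of the factorization is encoded by the involution `p i` sending
each vertex to its partner. -/
structure IsOneFactorization (G : SimpleGraph V) (p : ι → V → V) : Prop where
  involutive : ∀ i, Involutive (p i)
  injective : ∀ v, Injective (p · v)
  range_eq : ∀ v, Set.range (p · v) = G.neighborSet v

theorem IsOneFactorization.adj {p : ι → V → V} (hp : G.IsOneFactorization p) (i : ι) (v : V) :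
    G.Adj v (p i v) := by
  rw [← mem_neighborSet, ← hp.range_eq]
  exact ⟨i, rfl⟩

theorem IsOneFactorization.comp_equiv {κ : Type*} {p : ι → V → V}
    (hp : G.IsOneFactorization p) (e : κ ≃ ι) : G.IsOneFactorization (p ∘ e) where
  involutive j := hp.involutive (e j)
  injective v := (hp.injective v).comp e.injective
  range_eq v := by rw [← hp.range_eq v]; exact e.surjective.range_comp (p · v)

theorem IsOneFactorization.cons {H : SimpleGraph V} {k : ℕ} {p : Fin k → V → V}
    (hp : H.IsOneFactorization p) {m : V → V} (hm : Involutive m)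
    (hH : ∀ v, H.neighborSet v = G.neighborSet v \ {m v}) (hmG : ∀ v, G.Adj v (m v)) :
    G.IsOneFactorization (Fin.cons m p : Fin (k + 1) → V → V) := by
  have hcons (v : V) : (fun i => (Fin.cons m p : Fin (k + 1) → V → V) i v) =
      Fin.cons (m v) (p · v) := by
    ext i; cases i using Fin.cases <;> rfl
  refine ⟨Fin.cases hm hp.involutive, fun v => ?_, fun v => ?_⟩
  · rw [hcons, Fin.cons_injective_iff, hp.range_eq, hH]
    exact ⟨fun h => h.2 rfl, hp.injective v⟩
  · rw [hcons, Fin.range_cons, hp.range_eq, hH, Set.insert_sdiff_singleton]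
    exact Set.insert_eq_of_mem (hmG v)

theorem IsBipartite.exists_isOneFactorization (hG : G.IsBipartite) {k : ℕ}
    (hreg : ∀ v, (G.neighborSet v).encard = k) :
    ∃ p : Fin k → V → V, G.IsOneFactorization p := by
  induction k generalizing G with
  | zero =>
    refine ⟨Fin.elim0, ⟨fun i => i.elim0, fun _ => injective_of_subsingleton _, fun v => ?_⟩⟩
    rw [Set.range_eq_empty, eq_comm, ← Set.encard_eq_zero, hreg, Nat.cast_zero]
  | succ k ih =>
    obtain ⟨M, hM⟩ := hG.exists_isPerfectMatching hreg k.succ_ne_zero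
    obtain ⟨m, hm⟩ := hM.exists_adj_iff_eq
    have hmG (v : V) : G.Adj v (m v) := M.adj_sub ((hm v _).2 rfl)
    have hminv : Involutive m := fun v => ((hm _ _).1 ((hm v _).2 rfl).symm).symm
    have hH := neighborSet_sdiff_spanningCoe hm
    obtain ⟨p, hp⟩ := ih (hG.mono_left sdiff_le) fun v => by
      rw [hH, Set.encard_sdiff_singleton_of_mem (show m v ∈ G.neighborSet v from hmG v), hreg]
      norm_cast
    exact ⟨_, hp.cons hminv hH hmG⟩

theorem IsOneFactorization.freeGroupStructure {d : ℕ} {p : Bool × Fin d → V → V}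
    (hp : G.IsOneFactorization p) (C : G.Coloring Bool) : FreeGroupStructure G d := by
  have hflip (j : Bool × Fin d) (v : V) : C (p j v) = !C v :=
    Bool.eq_not_of_ne (C.valid (hp.adj j v)).symm
  let σ (i : Fin d) : Equiv.Perm V :=
    { toFun v := p (C v, i) v
      invFun v := p (!C v, i) v
      left_inv v := by simp only [hflip, Bool.not_not]; exact hp.involutive _ v
      right_inv v := by simp only [hflip]; exact hp.involutive _ v }
  refine ⟨σ, fun x => ?_⟩
  have hσ : Sum.elim (fun i => σ i x) (fun i => (σ i)⁻¹ x) =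
      (p · x) ∘ Sum.elim (Prod.mk (C x)) (Prod.mk !C x) := by
    ext (i | i) <;> rfl
  have he := bijective_sumElim_prodMk_not (C x) (Fin d)
  rw [hσ, he.surjective.range_comp, hp.range_eq]
  exact ⟨(hp.injective x).comp he.injective, rfl⟩

theorem Coloring.freeGroupStructure (C : G.Coloring Bool) {d : ℕ}
    (hreg : ∀ v, (G.neighborSet v).encard = (2 * d : ℕ)) : FreeGroupStructure G d := by
  obtain ⟨p, hp⟩ := IsBipartite.exists_isOneFactorization C.colorable hreg
  exact (hp.comp_equiv (Fintype.equivFinOfCardEq (by simp))).freeGroupStructure C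

theorem neighborSet_doubleCover (v : V) (b : Bool) :
    (doubleCover G).neighborSet (v, b) = (·, !b) '' G.neighborSet v := by
  ext ⟨w, c⟩
  simp [doubleCover, Bool.eq_not]

end SimpleGraph

theorem bipartite_or_doubleCover_freeGroup_general {V : Type*} (G : SimpleGraph V)
    [G.LocallyFinite] (d : ℕ) (hreg : G.IsRegularOfDegree (2 * d)) :
    (G.Colorable 2 → FreeGroupStructure G d) ∧
    (¬ G.Colorable 2 → FreeGroupStructure (doubleCover G) d) := by
  rw [SimpleGraph.isRegularOfDegree_iff_encard_neighborSet] at hreg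
  refine ⟨fun ⟨C⟩ => (G.recolorOfEquiv finTwoEquiv C).freeGroupStructure hreg, fun _ => ?_⟩
  refine (SimpleGraph.Coloring.mk Prod.snd fun h => h.2 :
    (doubleCover G).Coloring Bool).freeGroupStructure fun ⟨v, b⟩ => ?_
  rw [SimpleGraph.neighborSet_doubleCover, (Prod.mk_left_injective (!b)).encard_image, hreg]

/-- Let `G` be a connected locally finite `2d`-regular simple graph,
`d ≥ 1`.  If `G` is bipartite then `G` carries such a family of `d` permutations; otherwise
its canonical double cover does.  (Equivalently: `G`, if bipartite, or `G ⊗ K₂`, otherwise,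
is isomorphic to a Schreier graph of the free group `F_d`.) -/
theorem bipartite_or_doubleCover_freeGroup {V : Type*} (G : SimpleGraph V)
    [G.LocallyFinite] (d : ℕ) (hd : 1 ≤ d) (hconn : G.Connected)
    (hreg : G.IsRegularOfDegree (2 * d)) :
    (G.Colorable 2 → FreeGroupStructure G d) ∧
    (¬ G.Colorable 2 → FreeGroupStructure (doubleCover G) d) :=
  bipartite_or_doubleCover_freeGroup_general G d hreg
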